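/- Let X₁, …, X_{n+1} be independent and identically distributed real-valued random variables whose common law is atomless (so that with probability one all n+1 values are distinct), let p ∈ {1, …, n}, and let C be the p-th smallest value among X₁, …, X_n. Then P(X_{n+1} ≤ C) = p/(n + 1). -/

import Mathlib

open MeasureTheory ProbabilityTheory
open scoped ENNReal

/-- The `p`-th smallest value (the `p`-th order statistic, `1 ≤ p ≤ n`) among `x 0, …, x (n-1)`:
the least `c` such that at least `p` of the values are `≤ c`. -/
noncomputable def orderStat {n : ℕ} (p : ℕ) (x : Fin n → ℝ) : ℝ :=
  sInf {c : ℝ | p ≤ (Finset.univ.filter fun i => x i ≤ c).card}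

section Aux

open Finset

lemma le_orderStat_iff {n : ℕ} {p : ℕ} (hp1 : 1 ≤ p) (hpn : p ≤ n) (x : Fin n → ℝ) (t : ℝ) :
    t ≤ orderStat p x ↔ (Finset.univ.filter fun i => x i < t).card < p := by
  have hn : 0 < n := lt_of_lt_of_le hp1 hpn
  have huni : (Finset.univ : Finset (Fin n)).Nonempty := ⟨⟨0, hn⟩, mem_univ _⟩
  have himg : (Finset.univ.image x).Nonempty := huni.image x
  set S : Set ℝ := {c : ℝ | p ≤ (Finset.univ.filter fun i => x i ≤ c).card} with hS
  have hne : S.Nonempty := by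
    refine ⟨(Finset.univ.image x).max' himg, ?_⟩
    have : (Finset.univ.filter fun i => x i ≤ (Finset.univ.image x).max' himg) = univ :=
      Finset.filter_true_of_mem fun i _ =>
        Finset.le_max' _ _ (mem_image_of_mem x (mem_univ i))
    simp only [hS, Set.mem_setOf_eq, this, Finset.card_univ, Fintype.card_fin]
    exact hpn
  have hbdd : BddBelow S := by
    refine ⟨(Finset.univ.image x).min' himg, fun b hb => ?_⟩
    have : 0 < (Finset.univ.filter fun i => x i ≤ b).card := lt_of_lt_of_le hp1 hb
    obtain ⟨j, hj⟩ := Finset.card_pos.mp this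
    exact le_trans (Finset.min'_le _ _ (mem_image_of_mem x (mem_univ j)))
      (Finset.mem_filter.mp hj).2
  constructor
  · intro ht
    by_contra hcard
    push_neg at hcard
    have hFne : (Finset.univ.filter fun i => x i < t).Nonempty :=
      Finset.card_pos.mp (lt_of_lt_of_le hp1 hcard)
    obtain ⟨k, hkmem, hkmax⟩ := Finset.exists_max_image _ x hFne
    have hkt : x k < t := (Finset.mem_filter.mp hkmem).2
    have hcS : x k ∈ S := by
      refine le_trans hcard (Finset.card_le_card fun i hi => ?_)
      exact Finset.mem_filter.mpr ⟨mem_univ i, hkmax i hi⟩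
    exact absurd (le_trans ht (csInf_le hbdd hcS)) (not_le.mpr hkt)
  · intro hcard
    refine le_csInf hne fun c hcS => ?_
    by_contra hct
    push_neg at hct
    have hsub : (Finset.univ.filter fun i => x i ≤ c) ⊆ Finset.univ.filter fun i => x i < t :=
      fun i hi => Finset.mem_filter.mpr
        ⟨mem_univ i, lt_of_le_of_lt (Finset.mem_filter.mp hi).2 hct⟩
    exact absurd (le_trans hcS (Finset.card_le_card hsub)) (not_le.mpr hcard)

/-- rank of coordinate `k` among all the coordinates -/
noncomputable def rk {n : ℕ} (x : Fin (n + 1) → ℝ) (k : Fin (n + 1)) : ℕ :=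
  (Finset.univ.filter fun i => x i ≤ x k).card

lemma rk_pos {n : ℕ} (x : Fin (n + 1) → ℝ) (k : Fin (n + 1)) : 1 ≤ rk x k :=
  Finset.card_pos.mpr ⟨k, Finset.mem_filter.mpr ⟨mem_univ k, le_refl _⟩⟩

lemma rk_le {n : ℕ} (x : Fin (n + 1) → ℝ) (k : Fin (n + 1)) : rk x k ≤ n + 1 := by
  calc rk x k ≤ (Finset.univ : Finset (Fin (n+1))).card := Finset.card_filter_le _ _
    _ = n + 1 := by simp

lemma rk_lt_of_lt {n : ℕ} {x : Fin (n + 1) → ℝ} {k k' : Fin (n + 1)}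
    (hlt : x k < x k') : rk x k < rk x k' := by
  apply Finset.card_lt_card
  refine Finset.ssubset_iff_of_subset (fun i hi => Finset.mem_filter.mpr
    ⟨mem_univ i, le_trans (Finset.mem_filter.mp hi).2 hlt.le⟩) |>.mpr ?_
  exact ⟨k', Finset.mem_filter.mpr ⟨mem_univ _, le_refl _⟩,
    fun hc => absurd (Finset.mem_filter.mp hc).2 (not_le.mpr hlt)⟩

lemma rk_injective {n : ℕ} {x : Fin (n + 1) → ℝ} (hx : Function.Injective x) :
    Function.Injective (rk x) := by
  intro k k' h
  by_contra hkk
  rcases lt_trichotomy (x k) (x k') with hlt | heq | hlt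
  · exact absurd (h ▸ rk_lt_of_lt hlt) (lt_irrefl _)
  · exact hkk (hx heq)
  · exact absurd (h ▸ rk_lt_of_lt hlt) (lt_irrefl _)

lemma rk_surj {n : ℕ} {x : Fin (n + 1) → ℝ} (hx : Function.Injective x)
    {r : ℕ} (hr : r ∈ Finset.Icc 1 (n + 1)) : ∃ k, rk x k = r := by
  have himg : Finset.univ.image (rk x) = Finset.Icc 1 (n + 1) := by
    apply Finset.eq_of_subset_of_card_le
    · intro r hr
      obtain ⟨k, _, hk⟩ := Finset.mem_image.mp hr
      exact Finset.mem_Icc.mpr ⟨hk ▸ rk_pos x k, hk ▸ rk_le x k⟩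
    · rw [Nat.card_Icc, Finset.card_image_of_injective _ (rk_injective hx),
        Finset.card_univ, Fintype.card_fin]
      omega
  obtain ⟨k, _, hk⟩ := Finset.mem_image.mp (himg ▸ hr)
  exact ⟨k, hk⟩

lemma measurable_rk {n : ℕ} (k : Fin (n + 1)) :
    Measurable fun x : Fin (n + 1) → ℝ => rk x k := by
  have : (fun x : Fin (n + 1) → ℝ => rk x k) =
      fun x => ∑ i : Fin (n + 1), if x i ≤ x k then 1 else 0 := by
    funext x
    rw [rk, Finset.card_filter]
  rw [this]
  exact Finset.measurable_sum _ fun i _ => Measurable.ite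
    (measurableSet_le (measurable_pi_apply i) (measurable_pi_apply k))
    measurable_const measurable_const

lemma card_filter_comp_equiv {α β : Type*} [Fintype α] [Fintype β] (σ : α ≃ β)
    (q : β → Prop) [DecidablePred q] :
    (Finset.univ.filter fun i => q (σ i)).card = (Finset.univ.filter q).card := by
  refine Finset.card_bij' (fun i _ => σ i) (fun j _ => σ.symm j) ?_ ?_ ?_ ?_
  · intro a ha
    exact Finset.mem_filter.mpr ⟨mem_univ _, (Finset.mem_filter.mp ha).2⟩
  · intro b hb
    refine Finset.mem_filter.mpr ⟨mem_univ _, ?_⟩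
    simpa using (Finset.mem_filter.mp hb).2
  · intro a _; simp
  · intro b _; simp

lemma count_lt_add_one {n : ℕ} {x : Fin (n + 1) → ℝ} (hx : Function.Injective x) :
    (Finset.univ.filter fun i : Fin n => x i.castSucc < x (Fin.last n)).card + 1 =
      rk x (Fin.last n) := by
  classical
  have hstep : (Finset.univ.filter fun i : Fin (n+1) => x i ≤ x (Fin.last n)) =
      insert (Fin.last n) (Finset.univ.filter fun i : Fin (n+1) => x i < x (Fin.last n)) := by
    ext i
    simp only [Finset.mem_filter, Finset.mem_insert, mem_univ, true_and]
    constructor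
    · intro h
      rcases eq_or_lt_of_le h with h | h
      · rcases eq_or_ne i (Fin.last n) with hi | hi
        · exact Or.inl hi
        · exact Or.inr (lt_of_le_of_ne (le_of_eq h) fun e => hi (hx e))
      · exact Or.inr h
    · rintro (h | h)
      · exact le_of_eq (by rw [h])
      · exact le_of_lt h
  have hnotmem : Fin.last n ∉ Finset.univ.filter fun i : Fin (n+1) => x i < x (Fin.last n) := by
    simp
  have hcount : (Finset.univ.filter fun i : Fin (n+1) => x i < x (Fin.last n)).card =
      (Finset.univ.filter fun i : Fin n => x i.castSucc < x (Fin.last n)).card := by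
    refine Finset.card_bij' (fun i hi => i.castPred ?_) (fun j _ => j.castSucc) ?_ ?_ ?_ ?_
    · intro e
      exact absurd (Finset.mem_filter.mp hi).2 (by simp [e])
    · intro a ha
      refine Finset.mem_filter.mpr ⟨mem_univ _, ?_⟩
      have := (Finset.mem_filter.mp ha).2
      simpa using this
    · intro b hb
      refine Finset.mem_filter.mpr ⟨mem_univ _, (Finset.mem_filter.mp hb).2⟩
    · intro a _; simp
    · intro b _; simp
  rw [rk, hstep, Finset.card_insert_of_notMem hnotmem, hcount]

end Aux

/-- Exact coverage of split conformal prediction: if `X 0, …, X n` are i.i.d. real random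
variables with atomless common law, `1 ≤ p ≤ n`, and `C` is the `p`-th smallest value among
the first `n` of them, then `P(X n ≤ C) = p / (n + 1)`. -/
theorem conformal_coverage_exact
    {Ω : Type*} [MeasurableSpace Ω] (P : Measure Ω) [IsProbabilityMeasure P]
    {n : ℕ} (X : Fin (n + 1) → Ω → ℝ)
    (hmeas : ∀ i, Measurable (X i))
    (hindep : iIndepFun X P)
    (hident : ∀ i j, IdentDistrib (X i) (X j) P P)
    (hatomless : ∀ i, NoAtoms (P.map (X i)))
    (p : ℕ) (hp1 : 1 ≤ p) (hpn : p ≤ n)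
    (C : Ω → ℝ) (hC : ∀ ω, C ω = orderStat p (fun i : Fin n => X i.castSucc ω)) :
    P {ω | X (Fin.last n) ω ≤ C ω} = ENNReal.ofReal ((p : ℝ) / ((n : ℝ) + 1)) := by
  classical
  set μ : Measure ℝ := P.map (X 0) with hμ
  have hmap_i : ∀ i, P.map (X i) = μ := fun i => (hident i 0).map_eq
  haveI hμatom : NoAtoms μ := hatomless 0
  haveI hμprob : IsProbabilityMeasure μ := Measure.isProbabilityMeasure_map (hmeas 0).aemeasurable
  set ν : Measure (Fin (n + 1) → ℝ) := Measure.pi (fun _ => μ) with hν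
  haveI hνprob : IsProbabilityMeasure ν := by rw [hν]; infer_instance
  set J : Ω → (Fin (n + 1) → ℝ) := fun ω i => X i ω with hJ
  have hJmeas : Measurable J := measurable_pi_lambda _ hmeas
  -- joint law is the product measure
  have hjoint : P.map J = ν := by
    rw [hν]
    refine (Measure.pi_eq fun s hs => ?_).symm
    rw [Measure.map_apply hJmeas (MeasurableSet.univ_pi hs)]
    have hpre : J ⁻¹' Set.pi Set.univ s = ⋂ i, X i ⁻¹' s i := by
      ext ω; simp [hJ, Set.mem_pi]
    rw [hpre]
    have h1 := hindep.measure_inter_preimage_eq_mul Finset.univ (sets := s)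
      (fun i _ => hs i)
    simp only [Finset.mem_univ, Set.iInter_true] at h1
    rw [h1]
    exact Finset.prod_congr rfl fun i _ => by
      rw [← hmap_i i, Measure.map_apply (hmeas i) (hs i)]
  -- the event as a set of vectors
  set E : Set (Fin (n + 1) → ℝ) :=
    {x | (Finset.univ.filter fun i : Fin n => x i.castSucc < x (Fin.last n)).card < p} with hE
  have hEmeas : MeasurableSet E := by
    have hg : Measurable fun x : Fin (n + 1) → ℝ =>
        (Finset.univ.filter fun i : Fin n => x i.castSucc < x (Fin.last n)).card := by
      have : (fun x : Fin (n + 1) → ℝ =>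
          (Finset.univ.filter fun i : Fin n => x i.castSucc < x (Fin.last n)).card) =
          fun x => ∑ i : Fin n, if x i.castSucc < x (Fin.last n) then 1 else 0 := by
        funext x; rw [Finset.card_filter]
      rw [this]
      exact Finset.measurable_sum _ fun i _ => Measurable.ite
        (measurableSet_lt (measurable_pi_apply _) (measurable_pi_apply _))
        measurable_const measurable_const
    exact hg (show MeasurableSet (Set.Iio p) from trivial)
  have hEventEq : {ω | X (Fin.last n) ω ≤ C ω} = J ⁻¹' E := by
    ext ω
    simp only [Set.mem_setOf_eq, Set.mem_preimage, hE, hJ, hC ω]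
    exact le_orderStat_iff hp1 hpn _ _
  rw [hEventEq, ← Measure.map_apply hJmeas hEmeas, hjoint]
  -- the set of injective vectors is conull
  set D : Set (Fin (n + 1) → ℝ) := {x | Function.Injective x} with hD
  have hDmeas : MeasurableSet D := by
    have hDeq : D = ⋂ i, ⋂ j, {x : Fin (n + 1) → ℝ | i ≠ j → x i ≠ x j} := by
      ext x
      simp only [hD, Set.mem_setOf_eq, Set.mem_iInter, Function.Injective]
      constructor
      · intro h i j hij he; exact hij (h he)
      · intro h a b he; by_contra hab; exact h a b hab he
    rw [hDeq]
    refine MeasurableSet.iInter fun i => MeasurableSet.iInter fun j => ?_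
    rcases eq_or_ne i j with rfl | hij
    · simp
    · have : {x : Fin (n + 1) → ℝ | i ≠ j → x i ≠ x j} = {x | x i = x j}ᶜ := by
        ext x; simp [hij]
      rw [this]
      exact (measurableSet_eq_fun (measurable_pi_apply i) (measurable_pi_apply j)).compl
  have hdiag : (μ.prod μ) {q : ℝ × ℝ | q.1 = q.2} = 0 := by
    rw [Measure.prod_apply (measurableSet_eq_fun measurable_fst measurable_snd)]
    have hfib : ∀ a : ℝ, (Prod.mk a ⁻¹' {q : ℝ × ℝ | q.1 = q.2}) = {a} := by
      intro a; ext b; simp [eq_comm]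
    simp only [hfib, measure_singleton]
    simp [hμatom.measure_singleton]
  have hpair_null : ∀ i j : Fin (n + 1), i ≠ j → ν {x | x i = x j} = 0 := by
    intro i j hij
    have hms : MeasurableSet {x : Fin (n + 1) → ℝ | x i = x j} :=
      measurableSet_eq_fun (measurable_pi_apply i) (measurable_pi_apply j)
    rw [← hjoint, Measure.map_apply hJmeas hms]
    have hI : IndepFun (X i) (X j) P := hindep.indepFun hij
    have hmp := (indepFun_iff_map_prod_eq_prod_map_map (hmeas i).aemeasurable
      (hmeas j).aemeasurable).mp hI
    have hset : J ⁻¹' {x | x i = x j} =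
        (fun ω => (X i ω, X j ω)) ⁻¹' {q : ℝ × ℝ | q.1 = q.2} := rfl
    rw [hset, ← Measure.map_apply ((hmeas i).prodMk (hmeas j))
      (measurableSet_eq_fun measurable_fst measurable_snd), hmp, hmap_i i, hmap_i j, hdiag]
  have hDcnull : ν Dᶜ = 0 := by
    have hsub : Dᶜ ⊆ ⋃ i, ⋃ j, {x : Fin (n + 1) → ℝ | i ≠ j ∧ x i = x j} := by
      intro x hx
      simp only [hD, Set.mem_compl_iff, Set.mem_setOf_eq, Function.Injective] at hx
      push_neg at hx
      obtain ⟨a, b, he, hab⟩ := hx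
      exact Set.mem_iUnion.mpr ⟨a, Set.mem_iUnion.mpr ⟨b, hab, he⟩⟩
    refine measure_mono_null hsub (measure_iUnion_null fun i => measure_iUnion_null fun j => ?_)
    rcases eq_or_ne i j with rfl | hij
    · simp
    · exact measure_mono_null (fun x hx => hx.2) (hpair_null i j hij)
  have hD1 : ν D = 1 := (prob_compl_eq_zero_iff hDmeas).mp hDcnull
  have hinterD : ∀ B : Set (Fin (n + 1) → ℝ), ν (B ∩ D) = ν B := fun B =>
    measure_inter_conull' (measure_mono_null (fun x hx => hx.2) hDcnull)
  -- rank level sets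
  set A : Fin (n + 1) → ℕ → Set (Fin (n + 1) → ℝ) := fun k r => {x | rk x k = r} with hA
  have hAmeas : ∀ k r, MeasurableSet (A k r) := fun k r => measurable_rk k (show MeasurableSet {r} from trivial)
  -- permutation invariance of the product measure
  have hperm : ∀ σ : Equiv.Perm (Fin (n + 1)), ν.map (fun x => x ∘ σ) = ν := by
    intro σ
    have hmeasc : Measurable fun x : Fin (n + 1) → ℝ => x ∘ σ :=
      measurable_pi_lambda _ fun j => measurable_pi_apply (σ j)
    rw [hν]
    refine (Measure.pi_eq fun s hs => ?_).symm
    rw [Measure.map_apply hmeasc (MeasurableSet.univ_pi hs)]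
    have hpre : (fun x : Fin (n + 1) → ℝ => x ∘ σ) ⁻¹' Set.pi Set.univ s =
        Set.pi Set.univ (fun j => s (σ.symm j)) := by
      ext x
      simp only [Set.mem_preimage, Set.mem_pi, Set.mem_univ, forall_true_left,
        Function.comp_apply]
      constructor
      · intro h j; simpa using h (σ.symm j)
      · intro h i; simpa using h (σ i)
    rw [hν] at *
    rw [hpre, Measure.pi_pi]
    exact Equiv.prod_comp σ.symm fun i => μ (s i)
  have hAlast : ∀ (k : Fin (n + 1)) (r : ℕ), ν (A k r) = ν (A (Fin.last n) r) := by
    intro k r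
    set σ : Equiv.Perm (Fin (n + 1)) := Equiv.swap k (Fin.last n) with hσ
    have hmeasc : Measurable fun x : Fin (n + 1) → ℝ => x ∘ σ :=
      measurable_pi_lambda _ fun j => measurable_pi_apply (σ j)
    have hpreim : (fun x : Fin (n + 1) → ℝ => x ∘ σ) ⁻¹' A k r = A (Fin.last n) r := by
      ext x
      simp only [Set.mem_preimage, hA, Set.mem_setOf_eq]
      have hrk : rk (x ∘ σ) k = rk x (Fin.last n) := by
        unfold rk
        have hσk : σ k = Fin.last n := Equiv.swap_apply_left _ _
        simp only [Function.comp_apply, hσk]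
        exact card_filter_comp_equiv σ (fun j => x j ≤ x (Fin.last n))
      rw [hrk]
    calc ν (A k r) = (ν.map (fun x => x ∘ σ)) (A k r) := by rw [hperm σ]
      _ = ν ((fun x => x ∘ σ) ⁻¹' A k r) := Measure.map_apply hmeasc (hAmeas k r)
      _ = ν (A (Fin.last n) r) := by rw [hpreim]
  -- each rank value has probability 1/(n+1)
  have hAval : ∀ r ∈ Finset.Icc 1 (n + 1), ν (A (Fin.last n) r) = ((n : ℝ≥0∞) + 1)⁻¹ := by
    intro r hr
    have hcover : D = ⋃ k, (A k r ∩ D) := by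
      ext x
      constructor
      · intro hx
        obtain ⟨k, hk⟩ := rk_surj hx hr
        exact Set.mem_iUnion.mpr ⟨k, hk, hx⟩
      · intro hx
        obtain ⟨k, hk⟩ := Set.mem_iUnion.mp hx
        exact hk.2
    have hdisj : Pairwise (Function.onFun Disjoint fun k => A k r ∩ D) := by
      intro k k' hkk
      rw [Function.onFun, Set.disjoint_left]
      rintro x ⟨hxk, hxD⟩ ⟨hxk', _⟩
      exact hkk (rk_injective hxD (hxk.trans hxk'.symm))
    have hsum : ∑ k : Fin (n + 1), ν (A k r ∩ D) = 1 := by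
      rw [← tsum_fintype (L := SummationFilter.unconditional _), ← measure_iUnion hdisj fun k => (hAmeas k r).inter hDmeas,
        ← hcover, hD1]
    have hsum' : ((n : ℝ≥0∞) + 1) * ν (A (Fin.last n) r) = 1 := by
      have : ∀ k : Fin (n + 1), ν (A k r ∩ D) = ν (A (Fin.last n) r) := fun k => by
        rw [hinterD, hAlast k r]
      rw [Finset.sum_congr rfl fun k _ => this k, Finset.sum_const, Finset.card_univ,
        Fintype.card_fin, nsmul_eq_mul] at hsum
      rwa [Nat.cast_add, Nat.cast_one] at hsum
    have hne : ((n : ℝ≥0∞) + 1) ≠ 0 := by simp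
    have hnetop : ((n : ℝ≥0∞) + 1) ≠ ⊤ := by
      simp [ENNReal.add_ne_top]
    calc ν (A (Fin.last n) r) = ((n : ℝ≥0∞) + 1)⁻¹ * (((n : ℝ≥0∞) + 1) * ν (A (Fin.last n) r)) := by
          rw [← mul_assoc, ENNReal.inv_mul_cancel hne hnetop, one_mul]
      _ = ((n : ℝ≥0∞) + 1)⁻¹ := by rw [hsum', mul_one]
  -- the event in terms of ranks
  have hED : E ∩ D = (⋃ r ∈ Finset.Icc 1 p, A (Fin.last n) r) ∩ D := by
    ext x
    simp only [Set.mem_inter_iff, Set.mem_iUnion, hE, hA, Set.mem_setOf_eq, exists_prop]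
    constructor
    · rintro ⟨hxE, hxD⟩
      refine ⟨⟨rk x (Fin.last n), ?_, rfl⟩, hxD⟩
      have hcnt := count_lt_add_one hxD
      refine Finset.mem_Icc.mpr ⟨rk_pos x _, ?_⟩
      omega
    · rintro ⟨⟨r, hr, hrr⟩, hxD⟩
      have hcnt := count_lt_add_one hxD
      refine ⟨?_, hxD⟩
      have := Finset.mem_Icc.mp hr
      omega
  have hEdisj : Pairwise (Function.onFun Disjoint
      fun r : ℕ => A (Fin.last n) r) := by
    intro r r' hrr
    rw [Function.onFun, Set.disjoint_left]
    intro x hx hx'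
    exact hrr ((hx.symm).trans hx')
  have hcomp : ν E = ∑ r ∈ Finset.Icc 1 p, ν (A (Fin.last n) r) := by
    rw [← hinterD E, hED, hinterD]
    rw [measure_biUnion_finset (hEdisj.set_pairwise _) fun r _ => hAmeas _ r]
  rw [hcomp]
  have hsubIcc : ∀ r ∈ Finset.Icc 1 p, r ∈ Finset.Icc 1 (n + 1) := fun r hr => by
    have := Finset.mem_Icc.mp hr
    exact Finset.mem_Icc.mpr ⟨this.1, by omega⟩
  rw [Finset.sum_congr rfl fun r hr => hAval r (hsubIcc r hr), Finset.sum_const,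
    Nat.card_Icc]
  simp only [Nat.add_sub_cancel, nsmul_eq_mul]
  -- final arithmetic in ℝ≥0∞
  rw [ENNReal.ofReal_div_of_pos (by positivity)]
  have h1 : ENNReal.ofReal ((p : ℝ)) = (p : ℝ≥0∞) := ENNReal.ofReal_natCast p
  have h2 : ENNReal.ofReal ((n : ℝ) + 1) = (n : ℝ≥0∞) + 1 := by
    rw [ENNReal.ofReal_add (by positivity) zero_le_one, ENNReal.ofReal_natCast,
      ENNReal.ofReal_one]
  rw [h1, h2, ENNReal.div_eq_inv_mul, mul_comm]
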